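/- arXiv:1312.2262 — 4 statements merged into one kernel-verified Lean document; each statement's English description precedes it below -/
import Mathlib

section
/- For an n×n complex matrix A, the characteristic polynomial of A·conj(A) has real coefficients; equivalently, if λ is an eigenvalue of A·conj(A), then so is its complex conjugate λ̄ (with the same algebraic multiplicity). -/
open Matrix Polynomial

/-- Entrywise complex conjugate of a matrix. -/
def conjM {n : ℕ} (A : Matrix (Fin n) (Fin n) ℂ) : Matrix (Fin n) (Fin n) ℂ :=
  A.map (starRingEnd ℂ)

/-- Applying `f` turns `A * f A` into `f A * A`, which has the same characteristic polynomial. -/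
theorem Matrix.charpoly_mul_map_map_of_involutive {R n : Type*} [CommRing R] [Fintype n]
    [DecidableEq n] {f : R →+* R} (hf : Function.Involutive f) (A : Matrix n n R) :
    (A * A.map f).charpoly.map f = (A * A.map f).charpoly := by
  rw [← charpoly_map, Matrix.map_mul, Matrix.map_map, hf.comp_self, Matrix.map_id,
    charpoly_mul_comm]

theorem Polynomial.rootMultiplicity_eq_of_map_eq_self {R : Type*} [CommRing R] {f : R →+* R}
    (hf : Function.Injective f) {p : R[X]} (hp : p.map f = p) (a : R) :
    p.rootMultiplicity a = p.rootMultiplicity (f a) := by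
  conv_rhs => rw [← hp]
  exact eq_rootMultiplicity_map hf a

/-- The characteristic polynomial of `A ⬝ conj A` has real coefficients; equivalently,
eigenvalues come in conjugate pairs with equal algebraic multiplicities. -/
theorem charpoly_mul_conj_real_coeff (n : ℕ) (A : Matrix (Fin n) (Fin n) ℂ) :
    (∀ k : ℕ, ((A * conjM A).charpoly.coeff k).im = 0) ∧
    (∀ lam : ℂ,
      (A * conjM A).charpoly.rootMultiplicity lam
        = (A * conjM A).charpoly.rootMultiplicity (starRingEnd ℂ lam)) := by
  have hfix : (A * conjM A).charpoly.map (starRingEnd ℂ) = (A * conjM A).charpoly :=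
    charpoly_mul_map_map_of_involutive Complex.conj_conj A
  refine ⟨fun k => Complex.conj_eq_iff_im.mp ?_, fun lam => ?_⟩
  · rw [← coeff_map, hfix]
  · exact rootMultiplicity_eq_of_map_eq_self (starRingEnd ℂ).injective hfix lam
end

section
/- For any n×n complex matrices A, B with B symmetric and any invertible S and t ∈ [0,1] such that S_t is a continuous path in GL(n,ℂ) from I to S, the sign of det [[A_t, conj(B_t)],[B_t, conj(A_t)]] with (A_t,B_t) = (S_t* A S_t, S_tᵀ B S_t) is constant in t. In particular, G-congruent pairs (A,B) and (ζ P* A P, ζ̄ Pᵀ B P), with |ζ|=1 and P invertible, have determinants det [[A, conj(B)],[B, conj(A)]] of the same sign, so G-congruence preserves ellipticity and hyperbolicity. -/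
/-!
Conjugating `[[A, conj B], [B, conj A]]` by the block-diagonal matrices `diag(Sᴴ, Sᵀ)` and
`diag(S, conj S)` gives the block matrix of `(Sᴴ A S, Sᵀ B S)`, so the determinant gets
multiplied by `|det S|⁴ > 0`; scaling by `(ζ, conj ζ)` multiplies it by `|ζ|^(2n) = 1`.
Hence the sign of the real part never changes, whatever path joins `1` to `S`.
-/

open Matrix

/-- The determinant of the block matrix `[[A, conj B],[B, conj A]]`. -/
noncomputable def pairDet {n : ℕ} (A B : Matrix (Fin n) (Fin n) ℂ) : ℂ :=
  (Matrix.fromBlocks A (conjM B) B (conjM A)).det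

section conjM

variable {n : ℕ}

lemma conjM_mul (X Y : Matrix (Fin n) (Fin n) ℂ) : conjM (X * Y) = conjM X * conjM Y :=
  Matrix.map_mul

lemma conjM_transpose (X : Matrix (Fin n) (Fin n) ℂ) : conjM Xᵀ = Xᴴ := rfl

lemma conjM_conjTranspose (X : Matrix (Fin n) (Fin n) ℂ) : conjM Xᴴ = Xᵀ := by
  ext i j; simp [conjM]

lemma conjM_smul (c : ℂ) (X : Matrix (Fin n) (Fin n) ℂ) :
    conjM (c • X) = starRingEnd ℂ c • conjM X := by
  ext i j; simp [conjM]

lemma det_conjM (X : Matrix (Fin n) (Fin n) ℂ) : (conjM X).det = starRingEnd ℂ X.det := by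
  rw [show conjM X = Xᴴᵀ from rfl, det_transpose, det_conjTranspose, starRingEnd_apply]

end conjM

section pairDet

variable {n : ℕ} (A B : Matrix (Fin n) (Fin n) ℂ)

lemma fromBlocks_congruence (S : Matrix (Fin n) (Fin n) ℂ) :
    fromBlocks (Sᴴ * A * S) (conjM (Sᵀ * B * S)) (Sᵀ * B * S) (conjM (Sᴴ * A * S)) =
      fromBlocks Sᴴ 0 0 Sᵀ * fromBlocks A (conjM B) B (conjM A) * fromBlocks S 0 0 (conjM S) := by
  simp [fromBlocks_multiply, conjM_mul, conjM_transpose, conjM_conjTranspose, Matrix.mul_assoc]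

lemma pairDet_congruence (S : Matrix (Fin n) (Fin n) ℂ) :
    pairDet (Sᴴ * A * S) (Sᵀ * B * S) = (Complex.normSq S.det ^ 2 : ℝ) * pairDet A B := by
  rw [pairDet, pairDet, fromBlocks_congruence, det_mul, det_mul, det_fromBlocks_zero₂₁,
    det_fromBlocks_zero₂₁, det_conjTranspose, det_transpose, det_conjM, Complex.ofReal_pow,
    ← Complex.mul_conj, starRingEnd_apply]
  ring

lemma pairDet_smul (ζ : ℂ) :
    pairDet (ζ • A) (starRingEnd ℂ ζ • B) = (Complex.normSq ζ ^ n : ℝ) * pairDet A B := by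
  have hblocks : fromBlocks (ζ • A) (conjM (starRingEnd ℂ ζ • B)) (starRingEnd ℂ ζ • B)
      (conjM (ζ • A)) =
      fromBlocks (ζ • 1) 0 0 (starRingEnd ℂ ζ • 1) * fromBlocks A (conjM B) B (conjM A) := by
    simp [fromBlocks_multiply, conjM_smul]
  rw [pairDet, pairDet, hblocks, det_mul, det_fromBlocks_zero₂₁, det_smul, det_smul, det_one,
    Fintype.card_fin, Complex.ofReal_pow, ← Complex.mul_conj]
  ring

end pairDet

lemma Real.sign_mul_of_pos {c : ℝ} (hc : 0 < c) (x : ℝ) : Real.sign (c * x) = Real.sign x := by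
  rcases lt_trichotomy x 0 with hx | rfl | hx
  · rw [Real.sign_of_neg hx, Real.sign_of_neg (mul_neg_of_pos_of_neg hc hx)]
  · rw [mul_zero]
  · rw [Real.sign_of_pos hx, Real.sign_of_pos (mul_pos hc hx)]

theorem sign_pairDet_congruence_general (n : ℕ) (A B : Matrix (Fin n) (Fin n) ℂ)
    (St : ℝ → Matrix (Fin n) (Fin n) ℂ) (hinv : ∀ t, IsUnit (St t).det) :
    (∀ t ∈ Set.Icc (0 : ℝ) 1,
      Real.sign ((pairDet ((St t)ᴴ * A * St t) ((St t)ᵀ * B * St t)).re)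
        = Real.sign ((pairDet A B).re)) ∧
    (∀ (ζ : ℂ) (P : Matrix (Fin n) (Fin n) ℂ), ‖ζ‖ = 1 → IsUnit P.det →
      ((0 < (pairDet A B).re ↔
          0 < (pairDet (ζ • (Pᴴ * A * P)) ((starRingEnd ℂ ζ) • (Pᵀ * B * P))).re) ∧
       ((pairDet A B).re < 0 ↔
          (pairDet (ζ • (Pᴴ * A * P)) ((starRingEnd ℂ ζ) • (Pᵀ * B * P))).re < 0))) := by
  refine ⟨fun t _ => ?_, fun ζ P hζ hP => ?_⟩
  · rw [pairDet_congruence, Complex.re_ofReal_mul]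
    exact Real.sign_mul_of_pos (pow_pos (Complex.normSq_pos.2 (hinv t).ne_zero) 2) _
  · have hζ : Complex.normSq ζ = 1 := by rw [← Complex.sq_norm, hζ, one_pow]
    have hc : 0 < Complex.normSq P.det ^ 2 := pow_pos (Complex.normSq_pos.2 hP.ne_zero) 2
    rw [pairDet_smul, hζ, one_pow, Complex.ofReal_one, one_mul, pairDet_congruence,
      Complex.re_ofReal_mul]
    exact ⟨(mul_pos_iff_of_pos_left hc).symm, (smul_neg_iff_of_pos_left hc).symm⟩

/-- Along a continuous path `S t` in `GL(n,ℂ)` from `I` to `S`, the sign of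
`det [[A_t, conj B_t],[B_t, conj A_t]]` with `(A_t,B_t) = (S_t* A S_t, S_tᵀ B S_t)` is constant;
in particular `G`-congruence (with `|ζ| = 1`, `P` invertible) preserves the sign of this
determinant, hence ellipticity and hyperbolicity. -/
theorem sign_pairDet_congruence (n : ℕ) (A B S : Matrix (Fin n) (Fin n) ℂ) (hB : Bᵀ = B)
    (St : ℝ → Matrix (Fin n) (Fin n) ℂ) (hcont : Continuous St)
    (h0 : St 0 = 1) (h1 : St 1 = S) (hinv : ∀ t, IsUnit (St t).det) :
    (∀ t ∈ Set.Icc (0 : ℝ) 1,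
      Real.sign ((pairDet ((St t)ᴴ * A * St t) ((St t)ᵀ * B * St t)).re)
        = Real.sign ((pairDet A B).re)) ∧
    (∀ (ζ : ℂ) (P : Matrix (Fin n) (Fin n) ℂ), ‖ζ‖ = 1 → IsUnit P.det →
      ((0 < (pairDet A B).re ↔
          0 < (pairDet (ζ • (Pᴴ * A * P)) ((starRingEnd ℂ ζ) • (Pᵀ * B * P))).re) ∧
       ((pairDet A B).re < 0 ↔
          (pairDet (ζ • (Pᴴ * A * P)) ((starRingEnd ℂ ζ) • (Pᵀ * B * P))).re < 0))) :=
  sign_pairDet_congruence_general n A B St hinv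
end

section
/- The function f(z,w) = (1 + |z|²)·|w − (1/2)(z̄₁² + z̄₂² + ⋯ + z̄ₙ²)|² on ℂⁿ × ℂ is plurisubharmonic in a neighborhood U of the origin, strictly plurisubharmonic on U \ Y where Y = {w = (1/2)(z̄₁² + ⋯ + z̄ₙ²)}, and its complex Hessian restricted to TY/T^ℂY is strictly positive. -/
open Complex

/-- The Levi form of a real-valued function `f` on a complex normed space, at `p`,
evaluated on the vector `v`:  `L_f(p)(v) = (1/4)(D²f(p)(v,v) + D²f(p)(iv,iv))`. -/
noncomputable def leviForm {E : Type*} [NormedAddCommGroup E] [NormedSpace ℂ E]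
    (f : E → ℝ) (p v : E) : ℝ :=
  (1 / 4) * (iteratedFDeriv ℝ 2 f p ![v, v]
    + iteratedFDeriv ℝ 2 f p ![Complex.I • v, Complex.I • v])

/-- `ψ(z,w) = w − (1/2)(z̄₁² + ⋯ + z̄ₙ²)`; the submanifold `Y` is `{ψ = 0}`. -/
noncomputable def psiF (n : ℕ) (p : (Fin n → ℂ) × ℂ) : ℂ :=
  p.2 - (1 / 2) * ∑ k, (starRingEnd ℂ (p.1 k)) ^ 2

/-- `f(z,w) = (1 + |z|²)·|w − (1/2)(z̄₁² + ⋯ + z̄ₙ²)|²`. -/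
noncomputable def fF (n : ℕ) (p : (Fin n → ℂ) × ℂ) : ℝ :=
  (1 + ∑ k, Complex.normSq (p.1 k)) * Complex.normSq (psiF n p)

/-!
Along a real line `t ↦ p + t • v` the function `f` is a real polynomial in `t`, so `D²f(p)(v, v)` is
twice its `t²`-coefficient. Adding the contributions of `v` and `i • v`, the terms `ψ̄ · Σ v̄ₖ²`
cancel and, with `A = Σ z̄ₖ vₖ` and `B = Σ zₖ vₖ`,

  `L_f(p)(v) = |ψ|² |v_z|² + (1 + |z|²)(|v_w|² + |B|²) + 2 Re (Ā ψ̄ v_w) - 2 Re (A ψ̄ B̄)`.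

By Cauchy–Schwarz `|A| ≤ |z| |v_z| ≤ |v_z| / 2` when `|z|² ≤ 1/4`, and AM–GM on the two cross terms
leaves `L_f(p)(v) ≥ (|ψ|² |v_z|² + |v_w|²) / 4`. A vector of `TY` outside `T^ℂY` has `v_w ≠ 0`,
because `dψ(i v) = i (2 v_w - dψ(v))`.
-/

open Polynomial ComplexConjugate

theorem iteratedFDeriv_two_apply_self_eq_deriv_deriv {E F : Type*} [NormedAddCommGroup E]
    [NormedSpace ℝ E] [NormedAddCommGroup F] [NormedSpace ℝ F] {f : E → F}
    (hf : ContDiff ℝ 2 f) (p v : E) :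
    iteratedFDeriv ℝ 2 f p ![v, v] = deriv (deriv fun t : ℝ => f (p + t • v)) 0 := by
  have hline (t : ℝ) : HasDerivAt (fun t : ℝ => p + t • v) v t := by
    simpa using ((hasDerivAt_id t).smul_const v).const_add p
  have hf₁ : Differentiable ℝ f := hf.differentiable two_ne_zero
  have hf₂ : Differentiable ℝ (fderiv ℝ f) :=
    (hf.fderiv_right (m := 1) le_rfl).differentiable one_ne_zero
  have hderiv : deriv (fun t : ℝ => f (p + t • v)) = fun t => fderiv ℝ f (p + t • v) v :=
    funext fun t => ((hf₁ _).hasFDerivAt.comp_hasDerivAt t (hline t)).deriv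
  have h := ((hf₂ _).hasFDerivAt.clm_apply (hasFDerivAt_const v _)).comp_hasDerivAt 0 (hline 0)
  rw [zero_smul, add_zero] at h
  rw [hderiv, iteratedFDeriv_two_apply]
  convert h.deriv.symm using 1
  · simp
  · rfl

theorem Polynomial.deriv_deriv_eval_zero (P : ℝ[X]) :
    deriv (deriv fun t => P.eval t) 0 = 2 * P.coeff 2 := by
  have h (Q : ℝ[X]) : deriv (fun t => Q.eval t) = (eval · Q.derivative) := by
    ext
    exact Polynomial.deriv Q
  simp only [h, ← coeff_zero_eq_eval_zero, coeff_derivative]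
  norm_num [mul_comm]

theorem Polynomial.coeff_quadratic_mul_two (α β γ : ℝ) (Q : ℝ[X]) :
    ((C α + C β * X + C γ * X ^ 2) * Q).coeff 2
      = α * Q.coeff 2 + β * Q.coeff 1 + γ * Q.coeff 0 := by
  simp [add_mul, mul_assoc, coeff_X_pow_mul', coeff_X_mul]

@[fun_prop]
theorem Complex.contDiff_conj {m : WithTop ℕ∞} : ContDiff ℝ m (starRingEnd ℂ) :=
  conjCLE.contDiff

@[fun_prop]
theorem Complex.contDiff_normSq {m : WithTop ℕ∞} : ContDiff ℝ m normSq := by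
  have h : (normSq : ℂ → ℝ) = fun z => ‖z‖ ^ 2 := funext normSq_eq_norm_sq
  exact h ▸ contDiff_norm_sq ℝ

theorem Complex.normSq_star_dotProduct_le {ι : Type*} [Fintype ι] (z v : ι → ℂ) :
    normSq (star z ⬝ᵥ v) ≤ (∑ k, normSq (z k)) * ∑ k, normSq (v k) := by
  have h := norm_inner_le_norm (𝕜 := ℂ) (WithLp.toLp 2 z : EuclideanSpace ℂ ι) (WithLp.toLp 2 v)
  rw [EuclideanSpace.inner_toLp_toLp, dotProduct_comm] at h
  calc normSq (star z ⬝ᵥ v) ≤ (‖WithLp.toLp 2 z‖ * ‖WithLp.toLp 2 v‖) ^ 2 := by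
        rw [normSq_eq_norm_sq]; gcongr
    _ = (∑ k, normSq (z k)) * ∑ k, normSq (v k) := by
        simp [mul_pow, EuclideanSpace.norm_sq_eq, normSq_eq_norm_sq]

theorem Complex.sq_two_mul_re_le (u : ℂ) : (2 * u.re) ^ 2 ≤ 4 * normSq u := by
  nlinarith [re_sq_le_normSq u]

theorem abs_le_add_div_two_of_sq_le_mul {a b c : ℝ} (ha : 0 ≤ a) (hb : 0 ≤ b)
    (h : c ^ 2 ≤ a * b) : |c| ≤ (a + b) / 2 :=
  abs_le_of_sq_le_sq (h.trans (by nlinarith [sq_nonneg (a - b)])) (by positivity)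

noncomputable def normSqQuadratic (a b c : ℂ) : ℝ[X] :=
  C (normSq a) + C (2 * (conj a * b).re) * X + C (normSq b + 2 * (conj a * c).re) * X ^ 2
    + C (2 * (conj b * c).re) * X ^ 3 + C (normSq c) * X ^ 4

section normSqQuadratic

variable (a b c : ℂ)

theorem eval_normSqQuadratic (t : ℝ) :
    (normSqQuadratic a b c).eval t = normSq (a + t * b + t ^ 2 * c) := by
  simp only [normSqQuadratic, eval_add, eval_mul, eval_C, eval_X, eval_pow, normSq_apply,
    add_re, add_im, mul_re, mul_im, conj_re, conj_im, ofReal_re, ofReal_im, pow_two]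
  ring

theorem coeff_normSqQuadratic_zero : (normSqQuadratic a b c).coeff 0 = normSq a := by
  simp only [normSqQuadratic, coeff_add, coeff_C_mul_X_pow, coeff_C_mul_X, coeff_C]
  norm_num

theorem coeff_normSqQuadratic_one : (normSqQuadratic a b c).coeff 1 = 2 * (conj a * b).re := by
  simp only [normSqQuadratic, coeff_add, coeff_C_mul_X_pow, coeff_C_mul_X, coeff_C]
  norm_num

theorem coeff_normSqQuadratic_two :
    (normSqQuadratic a b c).coeff 2 = normSq b + 2 * (conj a * c).re := by
  simp only [normSqQuadratic, coeff_add, coeff_C_mul_X_pow, coeff_C_mul_X, coeff_C]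
  norm_num

end normSqQuadratic

theorem one_add_sum_normSq_add_smul {ι : Type*} [Fintype ι] (z v : ι → ℂ) (t : ℝ) :
    1 + ∑ k, normSq ((z + t • v) k)
      = (1 + ∑ k, normSq (z k)) + t * (2 * (star z ⬝ᵥ v).re) + t ^ 2 * ∑ k, normSq (v k) := by
  have h (k : ι) : normSq ((z + t • v) k)
      = normSq (z k) + t * (2 * (conj (z k) * v k).re) + t ^ 2 * normSq (v k) := by
    simp only [Pi.add_apply, Pi.smul_apply, real_smul, normSq_apply, add_re, add_im, mul_re,
      mul_im, conj_re, conj_im, ofReal_re, ofReal_im]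
    ring
  simp only [h, Finset.sum_add_distrib, ← Finset.mul_sum, dotProduct, re_sum, Pi.star_apply,
    star_def]
  ring

section psiF

variable (n : ℕ) (p v : (Fin n → ℂ) × ℂ)

theorem contDiff_psiF : ContDiff ℝ 2 (psiF n) := by
  unfold psiF
  fun_prop

theorem contDiff_fF : ContDiff ℝ 2 (fF n) := by
  unfold fF psiF
  fun_prop

theorem psiF_add_smul (t : ℝ) :
    psiF n (p + t • v)
      = psiF n p + t * (v.2 - conj (p.1 ⬝ᵥ v.1)) + t ^ 2 * (-(1 / 2) * conj (v.1 ⬝ᵥ v.1)) := by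
  have h (k : Fin n) : conj ((p + t • v).1 k) ^ 2
      = conj (p.1 k) ^ 2 + t * (2 * conj (p.1 k * v.1 k)) + t ^ 2 * conj (v.1 k * v.1 k) := by
    simp only [Prod.fst_add, Prod.smul_fst, Pi.add_apply, Pi.smul_apply, real_smul, map_add,
      map_mul, conj_ofReal]
    ring
  simp only [psiF, h, Finset.sum_add_distrib, ← Finset.mul_sum, dotProduct, map_sum,
    Prod.snd_add, Prod.smul_snd, real_smul]
  ring

theorem fderiv_psiF_apply : fderiv ℝ (psiF n) p v = v.2 - conj (p.1 ⬝ᵥ v.1) := by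
  rw [← ((contDiff_psiF n).differentiable two_ne_zero p).lineDeriv_eq_fderiv, lineDeriv]
  simp_rw [psiF_add_smul]
  have h : HasDerivAt (fun t : ℝ => (t : ℂ)) 1 0 := (hasDerivAt_id _).ofReal_comp
  exact (((h.mul_const _).const_add _).fun_add ((h.pow 2).mul_const _)).deriv.trans (by simp)

theorem fderiv_psiF_I_smul :
    fderiv ℝ (psiF n) p (I • v) = I * (2 * v.2 - fderiv ℝ (psiF n) p v) := by
  simp only [fderiv_psiF_apply, Prod.smul_fst, Prod.smul_snd, dotProduct_smul, smul_eq_mul,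
    map_mul, conj_I]
  ring

theorem fF_add_smul (t : ℝ) :
    fF n (p + t • v)
      = ((C (1 + ∑ k, normSq (p.1 k)) + C (2 * (star p.1 ⬝ᵥ v.1).re) * X
            + C (∑ k, normSq (v.1 k)) * X ^ 2)
          * normSqQuadratic (psiF n p) (v.2 - conj (p.1 ⬝ᵥ v.1))
              (-(1 / 2) * conj (v.1 ⬝ᵥ v.1))).eval t := by
  rw [eval_mul, eval_normSqQuadratic, ← psiF_add_smul, fF, Prod.fst_add, Prod.smul_fst,
    one_add_sum_normSq_add_smul]
  simp only [eval_add, eval_mul, eval_C, eval_X, eval_pow]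
  ring

theorem iteratedFDeriv_two_fF_apply_self :
    iteratedFDeriv ℝ 2 (fF n) p ![v, v]
      = 2 * ((1 + ∑ k, normSq (p.1 k)) * (normSq (v.2 - conj (p.1 ⬝ᵥ v.1))
            + 2 * (conj (psiF n p) * (-(1 / 2) * conj (v.1 ⬝ᵥ v.1))).re)
          + 2 * (star p.1 ⬝ᵥ v.1).re * (2 * (conj (psiF n p) * (v.2 - conj (p.1 ⬝ᵥ v.1))).re)
          + (∑ k, normSq (v.1 k)) * normSq (psiF n p)) := by
  rw [iteratedFDeriv_two_apply_self_eq_deriv_deriv (contDiff_fF n), funext (fF_add_smul n p v),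
    deriv_deriv_eval_zero, coeff_quadratic_mul_two, coeff_normSqQuadratic_zero,
    coeff_normSqQuadratic_one, coeff_normSqQuadratic_two]

theorem leviForm_fF :
    leviForm (fF n) p v
      = normSq (psiF n p) * ∑ k, normSq (v.1 k)
        + (1 + ∑ k, normSq (p.1 k)) * (normSq v.2 + normSq (p.1 ⬝ᵥ v.1))
        + 2 * (conj (star p.1 ⬝ᵥ v.1) * conj (psiF n p) * v.2).re
        - 2 * ((star p.1 ⬝ᵥ v.1) * conj (psiF n p) * conj (p.1 ⬝ᵥ v.1)).re := by
  rw [leviForm, iteratedFDeriv_two_fF_apply_self, iteratedFDeriv_two_fF_apply_self]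
  simp only [Prod.smul_fst, Prod.smul_snd, dotProduct_smul, smul_dotProduct, Pi.smul_apply,
    smul_eq_mul, normSq_mul, normSq_I, one_mul]
  simp only [normSq_apply, mul_re, mul_im, sub_re, sub_im, neg_re, neg_im, conj_re, conj_im,
    I_re, I_im, map_mul, conj_I]
  ring

theorem leviForm_fF_ge (hp : ∑ k, normSq (p.1 k) ≤ 1 / 4) :
    (normSq (psiF n p) * ∑ k, normSq (v.1 k) + normSq v.2) / 4 ≤ leviForm (fF n) p v := by
  rw [leviForm_fF]
  set s := ∑ k, normSq (v.1 k)
  set A := star p.1 ⬝ᵥ v.1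
  set B := p.1 ⬝ᵥ v.1
  set ψ := psiF n p
  have hs : 0 ≤ s := Finset.sum_nonneg fun k _ => normSq_nonneg _
  have hψ := normSq_nonneg ψ
  have hv₂ := normSq_nonneg v.2
  have hB := normSq_nonneg B
  have hA : normSq A ≤ s / 4 := (normSq_star_dotProduct_le p.1 v.1).trans (by nlinarith)
  have h₁ : (2 * (conj A * conj ψ * v.2).re) ^ 2 ≤ (normSq ψ * s) * normSq v.2 :=
    calc _ ≤ 4 * normSq (conj A * conj ψ * v.2) := sq_two_mul_re_le _
      _ = 4 * normSq A * (normSq ψ * normSq v.2) := by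
          simp only [normSq_mul, normSq_conj]; ring
      _ ≤ 4 * (s / 4) * (normSq ψ * normSq v.2) := by gcongr
      _ = _ := by ring
  -- the weights `1/2` and `2` make the `|B|²` terms cancel exactly
  have h₂ : (2 * (A * conj ψ * conj B).re) ^ 2 ≤ (normSq ψ * s / 2) * (2 * normSq B) :=
    calc _ ≤ 4 * normSq (A * conj ψ * conj B) := sq_two_mul_re_le _
      _ = 4 * normSq A * (normSq ψ * normSq B) := by
          simp only [normSq_mul, normSq_conj]; ring
      _ ≤ 4 * (s / 4) * (normSq ψ * normSq B) := by gcongr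
      _ = _ := by ring
  have hα : normSq v.2 + normSq B ≤ (1 + ∑ k, normSq (p.1 k)) * (normSq v.2 + normSq B) :=
    le_mul_of_one_le_left (by positivity)
      (le_add_of_nonneg_right (Finset.sum_nonneg fun k _ => normSq_nonneg _))
  have h₁' := neg_abs_le _ |>.trans'
    (neg_le_neg (abs_le_add_div_two_of_sq_le_mul (by positivity) hv₂ h₁))
  have h₂' := le_abs_self _ |>.trans
    (abs_le_add_div_two_of_sq_le_mul (by positivity) (by positivity) h₂)
  linarith

end psiF

/-- `f` is plurisubharmonic near `0`, strictly plurisubharmonic off `Y = {ψ = 0}`, and its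
Levi form is strictly positive on tangent vectors to `Y` not lying in the complex tangent
space `T^ℂY = TY ∩ J(TY)`. -/
theorem psh_near_hyperbolic_point (n : ℕ) :
    ∃ U : Set ((Fin n → ℂ) × ℂ), U ∈ nhds (0 : (Fin n → ℂ) × ℂ) ∧
      (∀ p ∈ U, ∀ v, 0 ≤ leviForm (fF n) p v) ∧
      (∀ p ∈ U, psiF n p ≠ 0 → ∀ v, v ≠ 0 → 0 < leviForm (fF n) p v) ∧
      (∀ p ∈ U, psiF n p = 0 → ∀ v, fderiv ℝ (psiF n) p v = 0 →
        fderiv ℝ (psiF n) p (Complex.I • v) ≠ 0 → 0 < leviForm (fF n) p v) := by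
  have hs (v : (Fin n → ℂ) × ℂ) : 0 ≤ ∑ k, normSq (v.1 k) :=
    Finset.sum_nonneg fun k _ => normSq_nonneg _
  refine ⟨{p | ∑ k, normSq (p.1 k) < 1 / 4}, ?_, ?_, ?_, ?_⟩
  · exact (isOpen_lt (by fun_prop) continuous_const).mem_nhds (by simp)
  · intro p hp v
    have := leviForm_fF_ge n p v hp.le
    nlinarith [normSq_nonneg (psiF n p), normSq_nonneg v.2, hs v]
  · intro p hp hψ v hv
    have := leviForm_fF_ge n p v hp.le
    have hψ := normSq_pos.2 hψ
    by_cases hv₁ : v.1 = 0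
    · have hv₂ := normSq_pos.2 fun h => hv (Prod.ext hv₁ h)
      nlinarith [hs v]
    · obtain ⟨k, hk⟩ := Function.ne_iff.1 hv₁
      have : 0 < ∑ k, normSq (v.1 k) :=
        Finset.sum_pos' (fun k _ => normSq_nonneg _) ⟨k, Finset.mem_univ k, normSq_pos.2 hk⟩
      nlinarith [normSq_nonneg v.2]
  · intro p hp _ v h₁ h₂
    rw [fderiv_psiF_I_smul, h₁] at h₂
    have hv₂ : 0 < normSq v.2 := normSq_pos.2 fun h => h₂ (by simp [h])
    have := leviForm_fF_ge n p v hp.le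
    nlinarith [normSq_nonneg (psiF n p), hs v]
end

section
/- For every complex symmetric n×n matrix B there exists an invertible complex matrix S such that Sᵀ B S is diagonal with nonnegative real entries; moreover if B is invertible, S can be chosen so that Sᵀ B S = I. -/
open Matrix

/-! Over a field of characteristic different from `2`, a symmetric bilinear form has an
orthogonal basis, so `B` is `ᵀ`-congruent to a diagonal matrix. Over `ℂ` every nonzero diagonal
entry is a square `z * z`, and rescaling the corresponding basis vector by `z⁻¹` turns it into
`1`. When `B` is invertible no zero entry can remain, and the diagonal matrix is the identity. -/

namespace Matrix

variable {K n : Type*} [Fintype n] [DecidableEq n]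

theorem exists_isUnit_det_transpose_mul_mul_eq_diagonal [Field K] [NeZero (2 : K)]
    {B : Matrix n n K} (hB : B.IsSymm) :
    ∃ S : Matrix n n K, IsUnit S.det ∧ ∃ D : n → K, Sᵀ * B * S = diagonal D := by
  let : Invertible (2 : K) := invertibleOfNonzero two_ne_zero
  obtain ⟨v, hv⟩ := LinearMap.BilinForm.exists_orthogonal_basis
    (LinearMap.BilinForm.isSymm_iff.1 (isSymm_toBilin'_iff_isSymm.2 hB))
  let e := Pi.basisFun K n
  let w := v.reindex (v.indexEquiv e)
  have hw :
      (e.toMatrix w)ᵀ * B * e.toMatrix w = LinearMap.BilinForm.toMatrix w B.toBilin' := by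
    rw [← LinearMap.BilinForm.toMatrix_mul_basis_toMatrix e,
      LinearMap.BilinForm.toMatrix_basisFun, LinearMap.BilinForm.toMatrix'_toBilin']
  refine ⟨e.toMatrix w, isUnit_det_of_right_inverse (e.toMatrix_mul_toMatrix_flip w),
    fun i => B.toBilin' (w i) (w i), ?_⟩
  ext i j
  rw [hw, LinearMap.BilinForm.toMatrix_apply, diagonal_apply]
  split_ifs with hij
  · rw [hij]
  · simpa only [w, Module.Basis.reindex_apply] using
      hv ((v.indexEquiv e).symm.injective.ne hij)

theorem mul_diagonal_transpose_mul_mul_mul_diagonal [CommSemiring K] (B S : Matrix n n K)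
    (c : n → K) :
    (S * diagonal c)ᵀ * B * (S * diagonal c) = diagonal c * (Sᵀ * B * S) * diagonal c := by
  simp only [transpose_mul, diagonal_transpose, Matrix.mul_assoc]

theorem _root_.IsAlgClosed.exists_ne_zero_mul_mul_self_eq_zero_or_one [Field K] [IsAlgClosed K]
    (d : K) : ∃ c : K, c ≠ 0 ∧ (c * d * c = 0 ∨ c * d * c = 1) := by
  obtain ⟨z, rfl⟩ := IsAlgClosed.exists_eq_mul_self d
  rcases eq_or_ne z 0 with rfl | hz
  · exact ⟨1, one_ne_zero, by simp⟩
  · exact ⟨z⁻¹, inv_ne_zero hz, Or.inr (by field_simp)⟩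

theorem exists_isUnit_det_transpose_mul_mul_eq_diagonal_zero_or_one [Field K] [IsAlgClosed K]
    [NeZero (2 : K)] {B : Matrix n n K} (hB : B.IsSymm) :
    ∃ S : Matrix n n K, IsUnit S.det ∧
      ∃ d : n → K, (∀ i, d i = 0 ∨ d i = 1) ∧ Sᵀ * B * S = diagonal d := by
  obtain ⟨S, hS, D, hSD⟩ := exists_isUnit_det_transpose_mul_mul_eq_diagonal hB
  choose c hc0 hc using fun i => IsAlgClosed.exists_ne_zero_mul_mul_self_eq_zero_or_one (D i)
  refine ⟨S * diagonal c, ?_, c * D * c, hc, ?_⟩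
  · rw [det_mul, det_diagonal]
    exact hS.mul (Finset.prod_ne_zero_iff.2 fun i _ => hc0 i).isUnit
  · rw [mul_diagonal_transpose_mul_mul_mul_diagonal, hSD, diagonal_mul_diagonal,
      diagonal_mul_diagonal]
    rfl

theorem diagonal_eq_one_of_isUnit_det [CommRing K] [Nontrivial K] {d : n → K}
    (hd : ∀ i, d i = 0 ∨ d i = 1) (h : IsUnit (diagonal d).det) : diagonal d = 1 := by
  rw [← diagonal_one]
  refine congrArg diagonal (funext fun i => (hd i).resolve_left fun hi => ?_)
  rw [det_diagonal, Finset.prod_eq_zero (Finset.mem_univ i) hi] at h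
  exact not_isUnit_zero h

end Matrix

/-- Takagi/Autonne factorization: every complex symmetric matrix is `ᵀ`-congruent to a
diagonal matrix with nonnegative real entries; an invertible complex symmetric matrix is
`ᵀ`-congruent to the identity. -/
theorem takagi_factorization (n : ℕ) (B : Matrix (Fin n) (Fin n) ℂ) (hB : Bᵀ = B) :
    (∃ S : Matrix (Fin n) (Fin n) ℂ, IsUnit S.det ∧
      ∃ d : Fin n → ℝ, (∀ i, 0 ≤ d i) ∧
        Sᵀ * B * S = Matrix.diagonal (fun i => (d i : ℂ))) ∧
    (IsUnit B.det →
      ∃ S : Matrix (Fin n) (Fin n) ℂ, IsUnit S.det ∧ Sᵀ * B * S = 1) := by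
  obtain ⟨S, hS, d, hd, hSd⟩ := exists_isUnit_det_transpose_mul_mul_eq_diagonal_zero_or_one hB
  refine ⟨⟨S, hS, fun i => (d i).re, fun i => ?_, ?_⟩, fun hBdet => ⟨S, hS, ?_⟩⟩
  · rcases hd i with h | h <;> simp [h]
  · rw [hSd]
    exact congrArg diagonal (funext fun i => by rcases hd i with h | h <;> simp [h])
  · rw [hSd]
    refine diagonal_eq_one_of_isUnit_det hd ?_
    rw [← hSd, det_mul, det_mul, det_transpose]
    exact (hS.mul hBdet).mul hS
end
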